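/- arXiv:1705.10571 — 2 statements merged into one kernel-verified Lean document; each statement's English description precedes it below -/
import Mathlib

section
/- Let $R = \mathbb{Q}[c_1, \ldots, c_k]$ be graded with $\deg c_j = j$, let $\bar{c}_n$ denote the homogeneous degree-$n$ component of $(1 + c_1 + \cdots + c_k)^{-1}$ (computed in the power series ring). Fix $m \in \mathbb{Q}$. Then for $1 < k < n$ there is no homogeneous element $t$ of degree $n - k$ in $R$ such that $\bar{c}_n = m^k \, c_k \cdot t$. -/
open Finset

/-- The classes `c₁, …, c_k` as variables `X 1, …, X k` of `ℚ[c₁, …, c_k]`,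
with the convention `cᵢ = 0` for `i > k` (and for `i = 0`). -/
noncomputable def chernVarQ (k : ℕ) (i : ℕ) : MvPolynomial ℕ ℚ :=
  if 1 ≤ i ∧ i ≤ k then MvPolynomial.X i else 0

/-- Case 1 abstraction: let `c̄ₙ` be the degree-`n` component of
`(1 + c₁ + ⋯ + c_k)⁻¹`, given by the recursion `c̄₀ = 1`,
`c̄ⱼ = -∑_{i=1}^{j} cᵢ c̄_{j-i}`. For `1 < k < n` and any `m : ℚ`, there is no
weighted-homogeneous polynomial `t` of degree `n - k` (with `deg cⱼ = j`)
such that `c̄ₙ = m^k · c_k · t`. -/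
theorem no_factorization_case1 (k n : ℕ) (hk : 1 < k) (hn : k < n) (m : ℚ)
    (cb : ℕ → MvPolynomial ℕ ℚ) (h0 : cb 0 = 1)
    (hrec : ∀ j, 1 ≤ j → cb j = -∑ i ∈ Icc 1 j, chernVarQ k i * cb (j - i)) :
    ¬ ∃ t : MvPolynomial ℕ ℚ,
        t.IsWeightedHomogeneous (fun i => i) (n - k) ∧
        cb n = m ^ k • (MvPolynomial.X k * t) := by
  rintro ⟨t, -, heq⟩
  set φ : MvPolynomial ℕ ℚ →ₐ[ℚ] MvPolynomial ℕ ℚ :=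
    MvPolynomial.aeval (fun i => if i = 1 then MvPolynomial.X 1 else 0) with hφ
  have hφX : ∀ i : ℕ, φ (MvPolynomial.X i)
      = if i = 1 then MvPolynomial.X 1 else 0 := by
    intro i; simp [hφ]
  have key : ∀ j, φ (cb j) = (-1 : ℚ) ^ j • (MvPolynomial.X 1 : MvPolynomial ℕ ℚ) ^ j := by
    intro j
    induction j using Nat.strong_induction_on with
    | _ j ih =>
      rcases Nat.eq_zero_or_pos j with h | h
      · subst h; simp [h0]
      · obtain ⟨j', rfl⟩ : ∃ j', j = j' + 1 := ⟨j - 1, by omega⟩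
        rw [hrec _ h, map_neg, map_sum]
        rw [Finset.sum_eq_single_of_mem 1 (Finset.mem_Icc.mpr ⟨le_refl 1, h⟩)]
        · have h1 : chernVarQ k 1 = MvPolynomial.X 1 := by
            simp [chernVarQ, le_of_lt hk]
          rw [map_mul, h1, hφX, if_pos rfl]
          simp only [Nat.add_sub_cancel]
          rw [ih j' (by omega)]
          simp only [MvPolynomial.smul_eq_C_mul, map_pow, map_neg, map_one]
          ring
        · intro i hi hne
          rw [map_mul]
          have : φ (chernVarQ k i) = 0 := by
            unfold chernVarQ
            split
            · rw [hφX, if_neg hne]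
            · simp
          rw [this, zero_mul]
  have h1 : φ (cb n) = (-1 : ℚ) ^ n • (MvPolynomial.X 1 : MvPolynomial ℕ ℚ) ^ n := key n
  rw [heq] at h1
  rw [map_smul, map_mul, hφX, if_neg (by omega), zero_mul, smul_zero] at h1
  have : ((MvPolynomial.X 1 : MvPolynomial ℕ ℚ)) ^ n ≠ 0 :=
    pow_ne_zero _ (MvPolynomial.X_ne_zero 1)
  have h2 : (-1 : ℚ) ^ n • (MvPolynomial.X 1 : MvPolynomial ℕ ℚ) ^ n ≠ 0 := by
    simp [smul_eq_zero, this, pow_ne_zero]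
  exact h2 h1.symm
end

section
/- For any integer $l \geq 1$, the system over $\mathbb{Z}$: $\alpha\beta = \binom{l+2}{2}$, $\theta\beta = l+1$, $\gamma\beta = l+2$, $\alpha$ divides $\frac{3l+5}{2}$ (with $l$ odd), has no solution. -/
/-- Combined divisibility lemma of Case 2(iv): for odd `l = 2j+1 ≥ 1`, the
system `αβ = (l+2)(l+1)/2`, `θβ = l+1`, `γβ = l+2`, `α ∣ (3l+5)/2` has no
integer solution. -/
theorem case2iv_system_no_solution :
    ¬ ∃ (l α β θ γ j : ℤ), 1 ≤ l ∧ l = 2 * j + 1 ∧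
      α * β = (l + 2) * (l + 1) / 2 ∧ θ * β = l + 1 ∧ γ * β = l + 2 ∧
      α ∣ (3 * l + 5) / 2 := by
  rintro ⟨l, α, β, θ, γ, j, hl, hlj, h1, h2, h3, h4⟩
  subst hlj
  have hj : 0 ≤ j := by omega
  have e1 : (2 * j + 1 + 2) * (2 * j + 1 + 1) = 2 * ((2 * j + 3) * (j + 1)) := by ring
  have e2 : (3 * (2 * j + 1) + 5) = 2 * (3 * j + 4) := by ring
  rw [e1, Int.mul_ediv_cancel_left _ (by norm_num)] at h1
  rw [e2, Int.mul_ediv_cancel_left _ (by norm_num)] at h4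
  have hb1 : β ∣ 2 * j + 1 + 1 := ⟨θ, by linarith⟩
  have hb2 : β ∣ 2 * j + 1 + 2 := ⟨γ, by linarith⟩
  have hbu : β ∣ 1 := by
    have := dvd_sub hb2 hb1
    simpa using this
  have hβ : β = 1 ∨ β = -1 := Int.isUnit_iff.mp (isUnit_of_dvd_one hbu)
  have habs : |α| = (2 * j + 3) * (j + 1) := by
    have hpos : 0 ≤ (2 * j + 3) * (j + 1) := by positivity
    rcases hβ with h | h <;> subst h <;> simp at h1
    · rw [h1, abs_of_nonneg hpos]
    · rw [abs_of_nonpos (by linarith)]; exact h1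
  have hda : |α| ∣ 3 * j + 4 := (abs_dvd α _).mpr h4
  have hle : |α| ≤ 3 * j + 4 := Int.le_of_dvd (by omega) hda
  have hj0 : j = 0 := by nlinarith
  subst hj0
  rw [habs] at hda
  norm_num at hda
end
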